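/- arXiv:math/0010145 — 2 statements merged into one kernel-verified Lean document; each statement's English description precedes it below -/
import Mathlib

section
/- With the quaternion parametrization of words W_{I_m}(α,β,γ) (axis of A along Ox, axis of B in the xy-plane at angle γ), for every multi-index I_m with |I_m| = n there exists a polynomial P with integer coefficients in six variables, of total degree at most 2n + 2m, such that ‖∂_α W_{I_m}(α,β,γ)‖² = P(cos α, sin α, cos β, sin β, cos γ, sin γ) for all (α,β,γ). -/
open Quaternion

/-- The quaternion `cos(sα) + i sin(sα)` representing `A^s`, where `A` is rotation by angle
`2α` about the `Ox`-axis. -/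
noncomputable def qA (s : ℤ) (α : ℝ) : ℍ[ℝ] :=
  ⟨Real.cos (s * α), Real.sin (s * α), 0, 0⟩

/-- The quaternion `cos(rβ) + sin(rβ)(i cos γ + j sin γ)` representing `B^r`, where `B` is
rotation by angle `2β` about the axis in the `xy`-plane at angle `γ` to `Ox`. -/
noncomputable def qB (r : ℤ) (β γ : ℝ) : ℍ[ℝ] :=
  ⟨Real.cos (r * β), Real.sin (r * β) * Real.cos γ, Real.sin (r * β) * Real.sin γ, 0⟩

/-- The quaternion-valued word `W_{I_m}(α,β,γ)` for the multi-index
`I_m = ((s_1,r_1),…,(s_m,r_m))`. -/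
noncomputable def qWord (l : List (ℤ × ℤ)) (α β γ : ℝ) : ℍ[ℝ] :=
  (l.map fun p => qA p.1 α * qB p.2 β γ).prod

/-- `|I_m| = Σ_p (|s_p| + |r_p|)`. -/
def wordLen (l : List (ℤ × ℤ)) : ℕ := (l.map fun p => p.1.natAbs + p.2.natAbs).sum

/-!
Every factor `cos(sα) + i sin(sα)`, `cos(rβ) + sin(rβ)(i cos γ + j sin γ)` has components that
are integer polynomials in `cos α, sin α, cos β, sin β, cos γ, sin γ` of degree `|s|`, resp.
`|r| + 1` (angle addition, `cos(n+1)x = cos nx cos x - sin nx sin x`, …). The Leibniz rule writes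
`∂_α W` as a sum of words of the same shape in which one factor `A^s` is replaced by
`s·(-sin sα + i cos sα)`, so its components have degree `≤ n + m`, and `‖∂_α W‖²` is the sum of
their squares.
-/

open MvPolynomial

variable {X σ R : Type*}

def IsIntPoly [CommRing R] (v : X → σ → R) (d : ℕ) (f : X → R) : Prop :=
  ∃ P : MvPolynomial σ ℤ, P.totalDegree ≤ d ∧ ∀ x, f x = aeval (v x) P

namespace IsIntPoly

variable [CommRing R] {v : X → σ → R} {d e : ℕ} {f g : X → R}

theorem mono (hf : IsIntPoly v d f) (hde : d ≤ e) : IsIntPoly v e f :=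
  let ⟨P, hP, hPf⟩ := hf
  ⟨P, hP.trans hde, hPf⟩

theorem intCast (d : ℕ) (n : ℤ) : IsIntPoly v d fun _ => (n : R) :=
  ⟨C n, (totalDegree_C n).trans_le d.zero_le, by simp⟩

theorem zero (d : ℕ) : IsIntPoly v d fun _ => 0 := by
  simpa using intCast (v := v) d 0

theorem one (d : ℕ) : IsIntPoly v d fun _ => 1 := by
  simpa using intCast (v := v) d 1

theorem var (i : σ) : IsIntPoly v 1 fun x => v x i :=
  ⟨MvPolynomial.X i, by simp, by simp⟩

theorem add (hf : IsIntPoly v d f) (hg : IsIntPoly v d g) : IsIntPoly v d fun x => f x + g x :=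
  let ⟨P, hP, hPf⟩ := hf
  let ⟨Q, hQ, hQg⟩ := hg
  ⟨P + Q, (totalDegree_add P Q).trans (max_le hP hQ), by simp [hPf, hQg]⟩

theorem neg (hf : IsIntPoly v d f) : IsIntPoly v d fun x => -f x :=
  let ⟨P, hP, hPf⟩ := hf
  ⟨-P, by rwa [totalDegree_neg], by simp [hPf]⟩

theorem sub (hf : IsIntPoly v d f) (hg : IsIntPoly v d g) : IsIntPoly v d fun x => f x - g x := by
  simpa only [sub_eq_add_neg] using hf.add hg.neg

theorem mul (hf : IsIntPoly v d f) (hg : IsIntPoly v e g) :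
    IsIntPoly v (d + e) fun x => f x * g x :=
  let ⟨P, hP, hPf⟩ := hf
  let ⟨Q, hQ, hQg⟩ := hg
  ⟨P * Q, (totalDegree_mul P Q).trans (add_le_add hP hQ), by simp [hPf, hQg]⟩

theorem intCast_mul (n : ℤ) (hf : IsIntPoly v d f) : IsIntPoly v d fun x => n * f x := by
  simpa using (intCast 0 n).mul hf

section Trigonometric

variable {v : X → σ → ℝ} {θ : X → ℝ}

theorem cos_sin_natCast_mul (hc : IsIntPoly v 1 fun x => Real.cos (θ x))
    (hs : IsIntPoly v 1 fun x => Real.sin (θ x)) (n : ℕ) :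
    (IsIntPoly v n fun x => Real.cos (n * θ x)) ∧ IsIntPoly v n fun x => Real.sin (n * θ x) := by
  induction n with
  | zero => simpa using ⟨one (v := v) 0, zero (v := v) 0⟩
  | succ n ih =>
    simp only [Nat.cast_succ, add_one_mul, Real.cos_add, Real.sin_add]
    exact ⟨(ih.1.mul hc).sub (ih.2.mul hs), (ih.2.mul hc).add (ih.1.mul hs)⟩

theorem cos_sin_intCast_mul (hc : IsIntPoly v 1 fun x => Real.cos (θ x))
    (hs : IsIntPoly v 1 fun x => Real.sin (θ x)) (n : ℤ) :
    (IsIntPoly v n.natAbs fun x => Real.cos (n * θ x)) ∧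
      IsIntPoly v n.natAbs fun x => Real.sin (n * θ x) := by
  obtain ⟨n, rfl | rfl⟩ := Int.eq_nat_or_neg n
  · simpa using cos_sin_natCast_mul hc hs n
  · have h := cos_sin_natCast_mul hc hs n
    simpa using ⟨h.1, h.2.neg⟩

end Trigonometric

end IsIntPoly

def IsIntPolyQuat [CommRing R] (v : X → σ → R) (d : ℕ) (f : X → ℍ[R]) : Prop :=
  IsIntPoly v d (fun x => (f x).re) ∧ IsIntPoly v d (fun x => (f x).imI) ∧
    IsIntPoly v d (fun x => (f x).imJ) ∧ IsIntPoly v d (fun x => (f x).imK)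

namespace IsIntPolyQuat

variable [CommRing R] {v : X → σ → R} {d e : ℕ} {f g : X → ℍ[R]}

theorem zero (d : ℕ) : IsIntPolyQuat v d fun _ => 0 := by
  simpa [IsIntPolyQuat] using IsIntPoly.zero (v := v) d

theorem one (d : ℕ) : IsIntPolyQuat v d fun _ => 1 := by
  simpa [IsIntPolyQuat] using ⟨IsIntPoly.one (v := v) d, IsIntPoly.zero (v := v) d⟩

theorem add (hf : IsIntPolyQuat v d f) (hg : IsIntPolyQuat v d g) :
    IsIntPolyQuat v d fun x => f x + g x :=
  ⟨hf.1.add hg.1, hf.2.1.add hg.2.1, hf.2.2.1.add hg.2.2.1, hf.2.2.2.add hg.2.2.2⟩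

theorem mul (hf : IsIntPolyQuat v d f) (hg : IsIntPolyQuat v e g) :
    IsIntPolyQuat v (d + e) fun x => f x * g x := by
  obtain ⟨f0, f1, f2, f3⟩ := hf
  obtain ⟨g0, g1, g2, g3⟩ := hg
  simp only [IsIntPolyQuat, re_mul, imI_mul, imJ_mul, imK_mul]
  exact ⟨(((f0.mul g0).sub (f1.mul g1)).sub (f2.mul g2)).sub (f3.mul g3),
    (((f0.mul g1).add (f1.mul g0)).add (f2.mul g3)).sub (f3.mul g2),
    (((f0.mul g2).sub (f1.mul g3)).add (f2.mul g0)).add (f3.mul g1),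
    (((f0.mul g3).add (f1.mul g2)).sub (f2.mul g1)).add (f3.mul g0)⟩

theorem normSq (hf : IsIntPolyQuat v d f) : IsIntPoly v (2 * d) fun x => normSq (f x) := by
  obtain ⟨f0, f1, f2, f3⟩ := hf
  simp only [normSq_def', sq, two_mul]
  exact (((f0.mul f0).add (f1.mul f1)).add (f2.mul f2)).add (f3.mul f3)

end IsIntPolyQuat

noncomputable def trigCoords (x : ℝ × ℝ × ℝ) : Fin 6 → ℝ :=
  ![Real.cos x.1, Real.sin x.1, Real.cos x.2.1, Real.sin x.2.1, Real.cos x.2.2, Real.sin x.2.2]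

theorem isIntPoly_cos_sin_intCast_mul_angleα (s : ℤ) :
    (IsIntPoly trigCoords s.natAbs fun x => Real.cos (s * x.1)) ∧
      IsIntPoly trigCoords s.natAbs fun x => Real.sin (s * x.1) :=
  have hc : IsIntPoly trigCoords 1 fun x => Real.cos x.1 := IsIntPoly.var 0
  have hs : IsIntPoly trigCoords 1 fun x => Real.sin x.1 := IsIntPoly.var 1
  IsIntPoly.cos_sin_intCast_mul hc hs s

theorem isIntPoly_cos_sin_intCast_mul_angleβ (r : ℤ) :
    (IsIntPoly trigCoords r.natAbs fun x => Real.cos (r * x.2.1)) ∧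
      IsIntPoly trigCoords r.natAbs fun x => Real.sin (r * x.2.1) :=
  have hc : IsIntPoly trigCoords 1 fun x => Real.cos x.2.1 := IsIntPoly.var 2
  have hs : IsIntPoly trigCoords 1 fun x => Real.sin x.2.1 := IsIntPoly.var 3
  IsIntPoly.cos_sin_intCast_mul hc hs r

theorem isIntPolyQuat_qA (s : ℤ) : IsIntPolyQuat trigCoords s.natAbs fun x => qA s x.1 :=
  have h := isIntPoly_cos_sin_intCast_mul_angleα s
  ⟨h.1, h.2, IsIntPoly.zero _, IsIntPoly.zero _⟩

theorem isIntPolyQuat_qB (r : ℤ) :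
    IsIntPolyQuat trigCoords (r.natAbs + 1) fun x => qB r x.2.1 x.2.2 :=
  have h := isIntPoly_cos_sin_intCast_mul_angleβ r
  ⟨h.1.mono (Nat.le_succ _), h.2.mul (IsIntPoly.var 4), h.2.mul (IsIntPoly.var 5),
    IsIntPoly.zero _⟩

noncomputable def qADeriv (s : ℤ) (α : ℝ) : ℍ[ℝ] :=
  ⟨-(s * Real.sin (s * α)), s * Real.cos (s * α), 0, 0⟩

theorem isIntPolyQuat_qADeriv (s : ℤ) :
    IsIntPolyQuat trigCoords s.natAbs fun x => qADeriv s x.1 :=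
  have h := isIntPoly_cos_sin_intCast_mul_angleα s
  ⟨(h.2.intCast_mul s).neg, h.1.intCast_mul s, IsIntPoly.zero _, IsIntPoly.zero _⟩

theorem hasDerivAt_qA (s : ℤ) (α : ℝ) : HasDerivAt (qA s) (qADeriv s α) α := by
  let i : ℍ[ℝ] := ⟨0, 1, 0, 0⟩
  have hsα : HasDerivAt (fun a : ℝ => (s : ℝ) * a) s α := by
    simpa using (hasDerivAt_id α).const_mul (s : ℝ)
  have h := (((Real.hasDerivAt_cos _).comp α hsα).smul_const (1 : ℍ[ℝ])).add
    (((Real.hasDerivAt_sin _).comp α hsα).smul_const i)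
  have hqA : qA s = fun a => Real.cos (s * a) • 1 + Real.sin (s * a) • i := by
    funext a
    ext <;> simp [qA, re_smul] <;> simp [i]
  rw [hqA]
  refine h.congr_deriv ?_
  ext <;> simp [qADeriv, re_smul] <;> simp [i] <;> ring

noncomputable def qWordDeriv : List (ℤ × ℤ) → ℝ → ℝ → ℝ → ℍ[ℝ]
  | [], _, _, _ => 0
  | p :: l, α, β, γ =>
      qADeriv p.1 α * qB p.2 β γ * qWord l α β γ + qA p.1 α * qB p.2 β γ * qWordDeriv l α β γ

theorem qWord_cons (p : ℤ × ℤ) (l : List (ℤ × ℤ)) (α β γ : ℝ) :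
    qWord (p :: l) α β γ = qA p.1 α * qB p.2 β γ * qWord l α β γ := by
  simp [qWord]

theorem wordLen_cons_add_length (p : ℤ × ℤ) (l : List (ℤ × ℤ)) :
    wordLen (p :: l) + (p :: l).length =
      p.1.natAbs + (p.2.natAbs + 1) + (wordLen l + l.length) := by
  simp only [wordLen, List.map_cons, List.sum_cons, List.length_cons]
  ring

theorem hasDerivAt_qWord (l : List (ℤ × ℤ)) (α β γ : ℝ) :
    HasDerivAt (fun a => qWord l a β γ) (qWordDeriv l α β γ) α := by
  induction l with
  | nil => simpa [qWord, qWordDeriv] using hasDerivAt_const α (1 : ℍ[ℝ])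
  | cons p l ih =>
    simp only [qWord_cons, qWordDeriv]
    exact ((hasDerivAt_qA p.1 α).mul_const _).mul ih

theorem isIntPolyQuat_qWord (l : List (ℤ × ℤ)) :
    IsIntPolyQuat trigCoords (wordLen l + l.length) fun x => qWord l x.1 x.2.1 x.2.2 := by
  induction l with
  | nil => simpa [qWord, wordLen] using IsIntPolyQuat.one 0
  | cons p l ih =>
    simp only [qWord_cons, wordLen_cons_add_length]
    exact ((isIntPolyQuat_qA p.1).mul (isIntPolyQuat_qB p.2)).mul ih

theorem isIntPolyQuat_qWordDeriv (l : List (ℤ × ℤ)) :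
    IsIntPolyQuat trigCoords (wordLen l + l.length) fun x => qWordDeriv l x.1 x.2.1 x.2.2 := by
  induction l with
  | nil => exact IsIntPolyQuat.zero _
  | cons p l ih =>
    simp only [qWordDeriv, wordLen_cons_add_length]
    exact (((isIntPolyQuat_qADeriv p.1).mul (isIntPolyQuat_qB p.2)).mul
      (isIntPolyQuat_qWord l)).add (((isIntPolyQuat_qA p.1).mul (isIntPolyQuat_qB p.2)).mul ih)

theorem stmt_6_general (l : List (ℤ × ℤ)) :
    ∃ P : MvPolynomial (Fin 6) ℤ,
      P.totalDegree ≤ 2 * wordLen l + 2 * l.length ∧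
      ∀ α β γ : ℝ,
        ‖deriv (fun a => qWord l a β γ) α‖ ^ 2 =
          MvPolynomial.aeval
            ![Real.cos α, Real.sin α, Real.cos β, Real.sin β, Real.cos γ, Real.sin γ] P := by
  obtain ⟨P, hP, hPeval⟩ := (isIntPolyQuat_qWordDeriv l).normSq
  refine ⟨P, by omega, fun α β γ => ?_⟩
  rw [(hasDerivAt_qWord l α β γ).deriv, sq, ← normSq_eq_norm_mul_self]
  exact hPeval (α, β, γ)

/-- For every multi-index `I_m` with `|I_m| = n` and `m` letters, there is an integer
polynomial `P` in six variables of total degree at most `2n + 2m` with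
`‖∂_α W_{I_m}(α,β,γ)‖² = P(cos α, sin α, cos β, sin β, cos γ, sin γ)` for all `(α,β,γ)`. -/
theorem stmt_6 (l : List (ℤ × ℤ)) (hnz : ∀ q ∈ l, q.1 ≠ 0 ∧ q.2 ≠ 0) :
    ∃ P : MvPolynomial (Fin 6) ℤ,
      P.totalDegree ≤ 2 * wordLen l + 2 * l.length ∧
      ∀ α β γ : ℝ,
        ‖deriv (fun a => qWord l a β γ) α‖ ^ 2 =
          MvPolynomial.aeval
            ![Real.cos α, Real.sin α, Real.cos β, Real.sin β, Real.cos γ, Real.sin γ] P :=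
  stmt_6_general l
end

section
/- The set of pairs (A,B) ∈ SO(3)×SO(3) for which the exponential Diophantine property fails is residual: for a Baire-generic (comeager) set of pairs (A,B), for every constant D > 0 there exist infinitely many n and reduced words W_n of length n in A, B, A⁻¹, B⁻¹ with 0 < ‖W_n − Id‖ < D^{−n}. -/
open Matrix MeasureTheory

noncomputable instance : MeasurableSpace (Matrix (Fin 3) (Fin 3) ℝ) :=
  MeasurableSpace.pi (m := fun _ : Fin 3 => MeasurableSpace.pi)

/-- `SO(3)`: the subgroup of the real orthogonal group of elements of determinant one. -/
noncomputable def SO3 : Subgroup (Matrix.unitaryGroup (Fin 3) ℝ) where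
  carrier := {A | (A : Matrix (Fin 3) (Fin 3) ℝ).det = 1}
  mul_mem' := by
    intro a b ha hb
    simp only [Set.mem_setOf_eq, Submonoid.coe_mul, Matrix.det_mul] at *
    rw [ha, hb, mul_one]
  one_mem' := by simp
  inv_mem' := by
    intro a ha
    simp only [Set.mem_setOf_eq] at *
    have : ((a⁻¹ : Matrix.unitaryGroup (Fin 3) ℝ) : Matrix (Fin 3) (Fin 3) ℝ)
        = star (a : Matrix (Fin 3) (Fin 3) ℝ) := rfl
    rw [this, Matrix.star_eq_conjTranspose, Matrix.det_conjTranspose, ha, star_one]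

/-- The underlying `3 × 3` matrix of an element of `SO(3)`. -/
noncomputable def SO3.mat (a : SO3) : Matrix (Fin 3) (Fin 3) ℝ := a.1.1

/-- The word `A^{s_1} B^{r_1} ⋯ A^{s_m} B^{r_m}`. -/
noncomputable def wordEval {G : Type*} [Group G] (A B : G) (l : List (ℤ × ℤ)) : G :=
  (l.map fun p => A ^ p.1 * B ^ p.2).prod

attribute [local instance] Matrix.frobeniusNormedAddCommGroup

/-!
For `D > 0` and `N`, the pairs having a reduced word `W` of length `n ≥ N` with
`0 < ‖W - Id‖ < D ^ (-n)` form an open set (word maps are continuous); it is also dense, so the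
intersection over `D ∈ ℕ` and `N ∈ ℕ` is residual. For density: by Euler's theorem every
rotation lies on a circle subgroup `t ↦ g R(t) g⁻¹`, whose points at rational multiples of `2π`
are torsion and are limits of non-torsion points. So near `(A, B)` there are `x` with
`x ^ k = 1` and `y` with `y ^ k'` as close to `Id` as we like but `≠ Id`, and then
`x ^ (k (N + 1)) y ^ k' = y ^ k'`.
-/

open Real Set Topology

def IsReducedWord (l : List (ℤ × ℤ)) : Prop := l ≠ [] ∧ ∀ q ∈ l, q.1 ≠ 0 ∧ q.2 ≠ 0

lemma wordEval_singleton {G : Type*} [Group G] (A B : G) (s r : ℤ) :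
    wordEval A B [(s, r)] = A ^ s * B ^ r := by
  simp [wordEval]

lemma wordLen_singleton (s r : ℤ) : wordLen [(s, r)] = s.natAbs + r.natAbs := by
  simp [wordLen]

lemma continuous_wordEval {G : Type*} [Group G] [TopologicalSpace G] [IsTopologicalGroup G]
    (l : List (ℤ × ℤ)) : Continuous fun p : G × G => wordEval p.1 p.2 l :=
  continuous_list_prod l fun q _ => (continuous_fst.zpow q.1).mul (continuous_snd.zpow q.2)

def torsionFrontier (G : Type*) [Monoid G] [TopologicalSpace G] : Set G :=
  {x | ∃ k, 0 < k ∧ x ^ k = 1 ∧ x ∈ closure {y | y ^ k ≠ 1}}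

lemma exists_pow_mem_diff_one {G : Type*} [Monoid G] [TopologicalSpace G] [ContinuousMul G]
    {x : G} {k : ℕ} (hxk : x ^ k = 1) (hx : x ∈ closure {y | y ^ k ≠ 1}) {W V : Set G}
    (hW : W ∈ 𝓝 x) (hV : V ∈ 𝓝 1) : ∃ y ∈ W, y ^ k ∈ V \ {1} := by
  have hWV : W ∩ (· ^ k) ⁻¹' V ∈ 𝓝 x :=
    Filter.inter_mem hW ((continuous_pow k).continuousAt.preimage_mem_nhds (by rwa [hxk]))
  obtain ⟨y, ⟨hyW, hyV⟩, hy1⟩ := mem_closure_iff_nhds.1 hx _ hWV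
  exact ⟨y, hyW, hyV, hy1⟩

section PeriodicOneParameterSubgroup

variable {G : Type*} [Group G] (φ : AddChar ℝ G) {T : ℝ}

lemma AddChar.map_add_zsmul_of_eq_one (hφT : φ T = 1) (t : ℝ) (j : ℤ) :
    φ (t + j • T) = φ t := by
  rw [AddChar.map_add_eq_mul, AddChar.map_zsmul_eq_zpow, hφT, _root_.one_zpow, mul_one]

lemma AddChar.mul_ratCast_mem_torsionFrontier [TopologicalSpace G] (hφ : Continuous φ)
    (hT : 0 < T) (hφT : φ T = 1) (hφ1 : ∀ t ∈ Ioo 0 T, φ t ≠ 1) (q : ℚ) :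
    φ (T * q) ∈ torsionFrontier G := by
  have hden : (0 : ℝ) < q.den := by exact_mod_cast q.den_pos
  have hq : (q.den : ℝ) * q = q.num := by
    rw [Rat.cast_def]
    field_simp
  refine ⟨q.den, q.den_pos, ?_, ?_⟩
  · have hkq : q.den • (T * q) = 0 + q.num • T := by
      rw [nsmul_eq_mul, zsmul_eq_mul, ← hq]
      ring
    rw [← AddChar.map_nsmul_eq_pow, hkq, φ.map_add_zsmul_of_eq_one hφT, AddChar.map_zero_eq_one]
  · have hgap : T * q < T * q + T / q.den := lt_add_of_pos_right _ (by positivity)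
    refine map_mem_closure hφ (closure_Ioo hgap.ne ▸ left_mem_Icc.2 hgap.le) fun s hs => ?_
    have hks : q.den • s = q.den * (s - T * q) + q.num • T := by
      rw [nsmul_eq_mul, zsmul_eq_mul, ← hq]
      ring
    rw [mem_ofPred_eq, ← AddChar.map_nsmul_eq_pow, hks, φ.map_add_zsmul_of_eq_one hφT]
    exact hφ1 _ ⟨mul_pos hden (sub_pos.2 hs.1), (lt_div_iff₀' hden).1 (by linarith [hs.2])⟩

lemma AddChar.range_subset_closure_torsionFrontier [TopologicalSpace G] (hφ : Continuous φ)
    (hT : 0 < T) (hφT : φ T = 1) (hφ1 : ∀ t ∈ Ioo 0 T, φ t ≠ 1) :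
    range φ ⊆ closure (torsionFrontier G) := by
  have hdense : DenseRange fun q : ℚ => T * q :=
    (mul_left_surjective₀ hT.ne').denseRange.comp Rat.denseRange_cast (continuous_const_mul T)
  rintro _ ⟨θ, rfl⟩
  exact map_mem_closure hφ (hdense θ) <| forall_mem_range.2 <|
    φ.mul_ratCast_mem_torsionFrontier hφ hT hφT hφ1

end PeriodicOneParameterSubgroup

section WordsNearOne

variable {G : Type*} [Group G] [TopologicalSpace G] [IsTopologicalGroup G]

def pairsWithWordNearOne (V : ℕ → Set G) (N : ℕ) : Set (G × G) :=
  {p | ∃ l, IsReducedWord l ∧ N ≤ wordLen l ∧ wordEval p.1 p.2 l ∈ V (wordLen l) \ {1}}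

lemma isOpen_pairsWithWordNearOne [T1Space G] {V : ℕ → Set G} (hV : ∀ n, IsOpen (V n)) (N : ℕ) :
    IsOpen (pairsWithWordNearOne V N) := by
  have h : pairsWithWordNearOne V N = ⋃ (l) (_ : IsReducedWord l ∧ N ≤ wordLen l),
      (fun p : G × G => wordEval p.1 p.2 l) ⁻¹' (V (wordLen l) \ {1}) := by
    ext p
    simp only [pairsWithWordNearOne, mem_ofPred_eq, mem_iUnion, mem_preimage, exists_prop,
      and_assoc]
  rw [h]
  exact isOpen_iUnion fun l => isOpen_iUnion fun _ =>
    ((hV _).sdiff isClosed_singleton).preimage (continuous_wordEval l)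

lemma dense_pairsWithWordNearOne (hT : Dense (torsionFrontier G)) {V : ℕ → Set G}
    (hV : ∀ n, V n ∈ 𝓝 1) (N : ℕ) : Dense (pairsWithWordNearOne V N) := by
  refine dense_iff_inter_open.2 fun U hU ⟨⟨a, b⟩, hab⟩ => ?_
  obtain ⟨u, v, hu, hv, hau, hbv, huv⟩ := isOpen_prod_iff.1 hU a b hab
  obtain ⟨x, hxu, k, hk, hxk, -⟩ := hT.inter_open_nonempty u hu ⟨a, hau⟩
  obtain ⟨z, hzv, k', hk', hzk', hz⟩ := hT.inter_open_nonempty v hv ⟨b, hbv⟩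
  -- `x ^ (k * (N + 1)) * y ^ k' = y ^ k'`, a reduced word of length at least `N`
  obtain ⟨y, hyv, hyV⟩ :=
    exists_pow_mem_diff_one hzk' hz (hv.mem_nhds hzv) (hV (k * (N + 1) + k'))
  have hlen : wordLen [((k * (N + 1) : ℕ), (k' : ℤ))] = k * (N + 1) + k' := by
    simp only [wordLen_singleton, Int.natAbs_natCast]
  refine ⟨(x, y), huv ⟨hxu, hyv⟩, [((k * (N + 1) : ℕ), (k' : ℤ))],
    ⟨List.cons_ne_nil _ _, ?_⟩, ?_, ?_⟩
  · simp only [List.mem_singleton, forall_eq, ne_eq, Nat.cast_eq_zero]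
    exact ⟨(Nat.mul_pos hk N.succ_pos).ne', hk'.ne'⟩
  · rw [hlen]
    nlinarith
  · rwa [hlen, wordEval_singleton, zpow_natCast, zpow_natCast, pow_mul, hxk, one_pow, one_mul]

lemma iInter_pairsWithWordNearOne_mem_residual [T1Space G] (hT : Dense (torsionFrontier G))
    {ι : Type*} [Countable ι] {V : ι → ℕ → Set G} (hV : ∀ i n, IsOpen (V i n))
    (hV1 : ∀ i n, (1 : G) ∈ V i n) :
    ⋂ (i) (N), pairsWithWordNearOne (V i) N ∈ residual (G × G) :=
  countable_iInter_mem.2 fun i => countable_iInter_mem.2 fun N =>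
    residual_of_dense_open (isOpen_pairsWithWordNearOne (hV i) N)
      (dense_pairsWithWordNearOne hT (fun n => (hV i n).mem_nhds (hV1 i n)) N)

end WordsNearOne

lemma exists_cos_sin_eq {x y : ℝ} (h : x ^ 2 + y ^ 2 = 1) : ∃ θ, cos θ = x ∧ sin θ = y := by
  obtain ⟨θ, hθ⟩ := (Complex.norm_eq_one_iff ⟨x, y⟩).1 <| by
    rw [Complex.norm_def, Complex.normSq_mk, ← sq, ← sq, h, sqrt_one]
  exact ⟨θ, by simpa using congrArg Complex.re hθ, by simpa using congrArg Complex.im hθ⟩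

noncomputable def rotMatrix (θ : ℝ) : Matrix (Fin 3) (Fin 3) ℝ :=
  !![1, 0, 0; 0, cos θ, -sin θ; 0, sin θ, cos θ]

lemma rotMatrix_zero : rotMatrix 0 = 1 := by
  ext i j
  fin_cases i <;> fin_cases j <;> simp [rotMatrix]

lemma rotMatrix_add (s t : ℝ) : rotMatrix (s + t) = rotMatrix s * rotMatrix t := by
  ext i j
  fin_cases i <;> fin_cases j <;>
    simp [rotMatrix, Matrix.mul_apply, Fin.sum_univ_three, cos_add, sin_add] <;> ring

lemma transpose_rotMatrix (θ : ℝ) : (rotMatrix θ)ᵀ = rotMatrix (-θ) := by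
  ext i j
  fin_cases i <;> fin_cases j <;> simp [rotMatrix]

lemma det_rotMatrix (θ : ℝ) : (rotMatrix θ).det = 1 := by
  simp only [rotMatrix, det_fin_three, of_apply, cons_val', cons_val_zero, cons_val_one, cons_val,
    cons_val_fin_one]
  linear_combination sin_sq_add_cos_sq θ

lemma continuous_rotMatrix : Continuous rotMatrix := by
  refine continuous_matrix fun i j => ?_
  fin_cases i <;> fin_cases j <;> simp [rotMatrix] <;> fun_prop

namespace SO3

open Matrix

lemma mat_injective : Function.Injective mat := fun _ _ h => Subtype.ext (Subtype.ext h)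

@[simp] lemma mat_one : mat 1 = 1 := rfl

@[simp] lemma mat_mul (a b : SO3) : mat (a * b) = mat a * mat b := rfl

@[simp] lemma mat_inv (a : SO3) : mat a⁻¹ = (mat a)ᵀ := by
  simp [mat, Matrix.star_eq_conjTranspose]

lemma det_mat (a : SO3) : (mat a).det = 1 := a.2

lemma transpose_mul_self (a : SO3) : (mat a)ᵀ * mat a = 1 := by
  rw [← mat_inv, ← mat_mul, inv_mul_cancel, mat_one]

noncomputable def ofMatrix (A : Matrix (Fin 3) (Fin 3) ℝ) (hA : Aᵀ * A = 1) (hdet : A.det = 1) :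
    SO3 :=
  ⟨⟨A, Matrix.mem_unitaryGroup_iff'.2 (by simpa [Matrix.star_eq_conjTranspose] using hA)⟩, hdet⟩

noncomputable def rot : AddChar ℝ SO3 where
  toFun θ := ofMatrix (rotMatrix θ)
    (by rw [transpose_rotMatrix, ← rotMatrix_add, neg_add_cancel, rotMatrix_zero]) (det_rotMatrix θ)
  map_zero_eq_one' := mat_injective rotMatrix_zero
  map_add_eq_mul' s t := mat_injective (rotMatrix_add s t)

lemma mat_rot (θ : ℝ) : mat (rot θ) = rotMatrix θ := rfl

lemma continuous_rot : Continuous rot :=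
  (continuous_rotMatrix.subtype_mk _).subtype_mk _

lemma rot_two_pi : rot (2 * π) = 1 := mat_injective <| by
  rw [mat_rot, mat_one]
  ext i j
  fin_cases i <;> fin_cases j <;> simp [rotMatrix]

lemma rot_ne_one {θ : ℝ} (hθ : θ ∈ Ioo 0 (2 * π)) : rot θ ≠ 1 := fun h => by
  have hcos : cos θ = 1 := by
    simpa [mat_rot, rotMatrix] using congrFun (congrFun (congrArg mat h) 1) 1
  rw [cos_eq_one_iff_of_lt_of_lt (by linarith [hθ.1, pi_pos]) hθ.2] at hcos
  exact hθ.1.ne' hcos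

lemma exists_mulVec_eq_self (a : SO3) : ∃ v : Fin 3 → ℝ, v ≠ 0 ∧ mat a *ᵥ v = v := by
  -- in odd dimension, `det (A - 1) = det (Aᵀ (A - 1)) = det (1 - A)ᵀ = -det (A - 1)`
  have hdet : (mat a - 1).det = 0 := by
    have h : (mat a - 1).det = -(mat a - 1).det := calc
      (mat a - 1).det = ((mat a)ᵀ * (mat a - 1)).det := by
        rw [det_mul, det_transpose, det_mat, one_mul]
      _ = (1 - mat a)ᵀ.det := by
        rw [Matrix.mul_sub, transpose_mul_self, Matrix.mul_one, transpose_sub, transpose_one]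
      _ = -(mat a - 1).det := by rw [det_transpose, ← neg_sub, det_neg]; norm_num
    linarith
  obtain ⟨v, hv, hv0⟩ := exists_mulVec_eq_zero_iff.2 hdet
  exact ⟨v, hv, by rwa [sub_mulVec, one_mulVec, sub_eq_zero] at hv0⟩

lemma exists_col_zero_eq_smul {v : Fin 3 → ℝ} (hv : v ≠ 0) :
    ∃ (g : SO3) (c : ℝ), (mat g).col 0 = c • v := by
  set u : EuclideanSpace ℝ (Fin 3) := ‖WithLp.toLp 2 v‖⁻¹ • WithLp.toLp 2 v
  have hu : ‖u‖ = 1 := norm_smul_inv_norm (by simpa using hv)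
  have horth : Orthonormal ℝ (({0} : Set (Fin 3)).domRestrict fun _ => u) := by
    refine orthonormal_iff_ite.2 fun i j => ?_
    rw [if_pos (Subtype.ext (i.2.trans j.2.symm))]
    exact (real_inner_self_eq_norm_sq u).trans (by rw [hu, one_pow])
  obtain ⟨b, hb⟩ := horth.exists_orthonormalBasis_extension_of_card_eq (by simp)
  set U : unitaryGroup (Fin 3) ℝ :=
    ⟨_, (EuclideanSpace.basisFun (Fin 3) ℝ).toMatrix_orthonormalBasis_mem_unitary b⟩
  have hU : (U : Matrix (Fin 3) (Fin 3) ℝ).col 0 = ‖WithLp.toLp 2 v‖⁻¹ • v := by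
    ext i
    simp [U, Module.Basis.toMatrix_apply, hb 0 rfl, u]
  rcases (Unitary.mem_iff_eq_one_or_eq_neg_one.1 (det_of_mem_unitary U.2)) with hdet | hdet
  · exact ⟨⟨U, hdet⟩, _, hU⟩
  · have hneg : (-U : unitaryGroup (Fin 3) ℝ) ∈ SO3 := by
      change ((-U : unitaryGroup (Fin 3) ℝ) : Matrix (Fin 3) (Fin 3) ℝ).det = 1
      rw [Unitary.coe_neg, det_neg, hdet]
      norm_num
    refine ⟨⟨-U, hneg⟩, -‖WithLp.toLp 2 v‖⁻¹, ?_⟩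
    rw [neg_smul, ← hU]
    rfl

lemma exists_eq_rot_of_col_zero {a : SO3} (ha : (mat a).col 0 = Pi.single 0 1) :
    ∃ θ, a = rot θ := by
  have hO := transpose_mul_self a
  have hrow : (mat a)ᵀ.col 0 = Pi.single 0 1 := calc
    _ = (mat a)ᵀ *ᵥ (mat a *ᵥ Pi.single 0 1) := by
      rw [mulVec_single_one (mat a), ha, mulVec_single_one]
    _ = Pi.single 0 1 := by rw [mulVec_mulVec, hO, one_mulVec]
  have h00 : mat a 0 0 = 1 := by simpa using congrFun ha 0
  have h10 : mat a 1 0 = 0 := by simpa using congrFun ha 1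
  have h20 : mat a 2 0 = 0 := by simpa using congrFun ha 2
  have h01 : mat a 0 1 = 0 := by simpa using congrFun hrow 1
  have h02 : mat a 0 2 = 0 := by simpa using congrFun hrow 2
  have hsq : mat a 1 1 ^ 2 + mat a 2 1 ^ 2 = 1 := by
    have := congrFun (congrFun hO 1) 1
    simp only [mul_apply, transpose_apply, Fin.sum_univ_three, h01, one_apply_eq] at this
    linear_combination this
  have hort : mat a 1 1 * mat a 1 2 + mat a 2 1 * mat a 2 2 = 0 := by
    have := congrFun (congrFun hO 1) 2
    simp only [mul_apply, transpose_apply, Fin.sum_univ_three, h01, h02, one_apply_ne,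
      Fin.reduceEq, ne_eq, not_false_eq_true] at this
    linear_combination this
  have hdet : mat a 1 1 * mat a 2 2 - mat a 1 2 * mat a 2 1 = 1 := by
    have := det_mat a
    rw [det_fin_three, h00, h01, h02, h10, h20] at this
    linear_combination this
  obtain ⟨θ, hcos, hsin⟩ := exists_cos_sin_eq hsq
  refine ⟨θ, mat_injective ?_⟩
  ext i j
  fin_cases i <;> fin_cases j <;> simp [mat_rot, rotMatrix, h00, h01, h02, h10, h20, hcos, hsin]
  · linear_combination mat a 1 1 * hort - mat a 2 1 * hdet - mat a 1 2 * hsq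
  · linear_combination mat a 1 1 * hdet + mat a 2 1 * hort - mat a 2 2 * hsq

theorem exists_eq_conj_rot (a : SO3) : ∃ g θ, a = g * rot θ * g⁻¹ := by
  obtain ⟨v, hv, hav⟩ := exists_mulVec_eq_self a
  obtain ⟨g, c, hg⟩ := exists_col_zero_eq_smul hv
  obtain ⟨θ, hθ⟩ := exists_eq_rot_of_col_zero (a := g⁻¹ * a * g) <| calc
    _ = (mat g)ᵀ *ᵥ (mat a *ᵥ (mat g).col 0) := by
      rw [← mulVec_single_one, ← mulVec_single_one (mat g)]
      simp only [mat_mul, mat_inv, mulVec_mulVec, Matrix.mul_assoc]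
    _ = (mat g)ᵀ *ᵥ (mat g).col 0 := by rw [hg, mulVec_smul, hav]
    _ = Pi.single 0 1 := by
      rw [← mulVec_single_one, mulVec_mulVec, transpose_mul_self, one_mulVec]
  exact ⟨g, θ, by rw [← hθ]; group⟩

theorem dense_torsionFrontier : Dense (torsionFrontier SO3) := fun a => by
  obtain ⟨g, θ, rfl⟩ := exists_eq_conj_rot a
  let φ : AddChar ℝ SO3 := (MulAut.conj g).toMonoidHom.compAddChar rot
  have hφ (t : ℝ) : φ t = g * rot t * g⁻¹ := rfl
  refine φ.range_subset_closure_torsionFrontier ?_ two_pi_pos ?_ (fun t ht => ?_) ⟨θ, hφ θ⟩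
  · exact (continuous_const.mul continuous_rot).mul continuous_const
  · rw [hφ, rot_two_pi, mul_one, mul_inv_cancel]
  · rw [hφ, Ne, conj_eq_one_iff]
    exact rot_ne_one ht

end SO3

/-- The set of pairs `(A,B) ∈ SO(3) × SO(3)` for which the exponential Diophantine property
fails is residual: for a Baire-generic set of pairs, for every `D > 0` there are infinitely
many `n` admitting a reduced word `W_n` of length `n` with `0 < ‖W_n − Id‖ < D^{−n}`. -/
theorem stmt_17 :
    {p : SO3 × SO3 | ∀ D > (0:ℝ),
      {n : ℕ | ∃ l : List (ℤ × ℤ), l ≠ [] ∧ (∀ q ∈ l, q.1 ≠ 0 ∧ q.2 ≠ 0) ∧ wordLen l = n ∧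
        0 < ‖SO3.mat (wordEval p.1 p.2 l) - 1‖ ∧
        ‖SO3.mat (wordEval p.1 p.2 l) - 1‖ < D ^ (-(n : ℝ))}.Infinite}
      ∈ residual (SO3 × SO3) := by
  let V (m n : ℕ) : Set SO3 := Metric.ball 1 ((m + 1 : ℝ) ^ (-(n : ℝ)))
  refine Filter.mem_of_superset (iInter_pairsWithWordNearOne_mem_residual
    SO3.dense_torsionFrontier (V := V) (fun _ _ => Metric.isOpen_ball)
    (fun _ _ => Metric.mem_ball_self (by positivity))) fun p hp D hD => ?_
  obtain ⟨m, hm⟩ := exists_nat_ge D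
  refine Set.infinite_of_forall_exists_gt fun N => ?_
  obtain ⟨l, ⟨hl, hlq⟩, hNl, hlV, hl1⟩ := Set.mem_iInter₂.1 hp m (N + 1)
  refine ⟨wordLen l, ⟨l, hl, hlq, rfl, ?_, ?_⟩, hNl⟩
  · exact norm_pos_iff.2 (sub_ne_zero.2 fun h => hl1 (SO3.mat_injective h))
  · calc _ < (m + 1 : ℝ) ^ (-(wordLen l : ℝ)) := hlV
      _ ≤ D ^ (-(wordLen l : ℝ)) :=
        Real.rpow_le_rpow_of_nonpos hD (by linarith) (by simp)
end
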